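/- Let S be a nonempty finite set and 1 ≤ k < n integers, and let u : S^n → ℕ be counts of observed paths with total M = Σ_{x∈S^n} u_x > 0. For a window v = (h, j) ∈ S^k × S, define the pooled transition count N(h,j) = Σ_{x∈S^n} u_x · #{ℓ : k+1 ≤ ℓ ≤ n, (x_{ℓ−k},…,x_{ℓ−1}) = h and x_ℓ = j}, the history count D(h) = Σ_{j∈S} N(h,j), and the initial count c(w) = Σ_{x : (x_1,…,x_k) = w} u_x for w ∈ S^k. Let (π̂, â) be any stochastic homogeneous parameter pair such that π̂(w) = c(w)/M for all w ∈ S^k and â(h,j) = N(h,j)/D(h) for every h ∈ S^k with D(h) > 0. Then for every stochastic homogeneous parameter pair (π, a), the likelihood satisfies ∏_{x∈S^n} ψ(π,a)_x^{u_x} ≤ ∏_{x∈S^n} ψ(π̂,â)_x^{u_x}; that is, the pooled empirical frequencies are the maximum likelihood estimators of the homogeneous k-th order multistate Markov model parameters. -/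

import Mathlib

open MvPolynomial

namespace MSM

variable {S : Type*}

/-- First `k` entries of a path of length `n`. -/
def pathInit {n k : ℕ} (hk : k ≤ n) (x : Fin n → S) : Fin k → S :=
  fun i => x (Fin.castLE hk i)

/-- Length-`m` contiguous segment of a path starting at position `s` (0-indexed). -/
def seg {n : ℕ} (s m : ℕ) (h : s + m ≤ n) (x : Fin n → S) : Fin m → S :=
  fun t => x ⟨s + t.1, by have := t.isLt; omega⟩

/-- The contiguous window `(x_ℓ, …, x_{ℓ+k})` of length `k+1` starting at position `ℓ`
(0-indexed); these are the windows `(x_{ℓ-k},…,x_ℓ)`, `k+1 ≤ ℓ ≤ n`, in 1-indexed notation. -/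
def window {n k : ℕ} (hkn : k < n) (ℓ : Fin (n - k)) (x : Fin n → S) : Fin (k + 1) → S :=
  fun t => x ⟨ℓ.1 + t.1, by have := ℓ.isLt; have := t.isLt; omega⟩

/-- The nonhomogeneous `k`-th order multistate Markov parametrization `φ`. -/
def phi {n k : ℕ} (hkn : k < n) (pi : (Fin k → S) → ℝ)
    (a : Fin (n - k) → (Fin (k + 1) → S) → ℝ) : (Fin n → S) → ℝ :=
  fun x => pi (pathInit hkn.le x) * ∏ ℓ : Fin (n - k), a ℓ (window hkn ℓ x)

/-- The homogeneous `k`-th order multistate Markov parametrization `ψ`. -/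
def psi {n k : ℕ} (hkn : k < n) (pi : (Fin k → S) → ℝ)
    (a : (Fin (k + 1) → S) → ℝ) : (Fin n → S) → ℝ :=
  fun x => pi (pathInit hkn.le x) * ∏ ℓ : Fin (n - k), a (window hkn ℓ x)

/-- The vanishing ideal of a subset of `ℝ^{S^n}` inside `ℝ[p_x : x ∈ S^n]`. -/
noncomputable def vanishingIdeal {σ : Type*} (W : Set (σ → ℝ)) : Ideal (MvPolynomial σ ℝ) where
  carrier := { f | ∀ p ∈ W, MvPolynomial.eval p f = 0 }
  add_mem' := by
    intro f g hf hg p hp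
    simp only [Set.mem_setOf_eq] at *
    rw [map_add, hf p hp, hg p hp, add_zero]
  zero_mem' := by intro p hp; simp
  smul_mem' := by
    intro c f hf p hp
    simp only [Set.mem_setOf_eq] at *
    rw [smul_eq_mul, map_mul, hf p hp, mul_zero]

open Finset

lemma gibbs {ι : Type*} [Fintype ι] (c : ι → ℕ) (q : ι → ℝ) (hq0 : ∀ i, 0 ≤ q i)
    (hq1 : ∑ i, q i ≤ 1) (M : ℕ) (hM : 0 < M) (hcM : ∑ i, c i = M) :
    ∏ i, q i ^ c i ≤ ∏ i, ((c i : ℝ) / M) ^ c i := by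
  set p : ι → ℝ := fun i => (c i : ℝ) / M with hp
  have hM0 : (0:ℝ) < M := by exact_mod_cast hM
  have hp0 : ∀ i, 0 ≤ p i := fun i => div_nonneg (Nat.cast_nonneg _) hM0.le
  have hp1 : ∑ i, p i = 1 := by
    rw [← Finset.sum_div, div_eq_one_iff_eq hM0.ne']
    exact_mod_cast hcM
  set z : ι → ℝ := fun i => if c i = 0 then 0 else q i / p i with hz
  have hz0 : ∀ i, 0 ≤ z i := by
    intro i
    by_cases h : c i = 0 <;> simp [hz, h, div_nonneg (hq0 i) (hp0 i)]
  have key : ∏ i, z i ^ p i ≤ ∑ i, p i * z i :=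
    Real.geom_mean_le_arith_mean_weighted univ p z (fun i _ => hp0 i) hp1 (fun i _ => hz0 i)
  have hsum : ∑ i, p i * z i ≤ 1 := by
    refine le_trans (le_trans (Finset.sum_le_sum (fun i _ => ?_)) hq1) le_rfl
    by_cases h : c i = 0
    · simpa [hz, h] using hq0 i
    · have hpi : p i ≠ 0 := by
        simp only [hp, div_ne_zero_iff]
        exact ⟨Nat.cast_ne_zero.mpr h, hM0.ne'⟩
      simp only [hz, if_neg h]
      rw [mul_div_cancel₀ _ hpi]
  have hzp : ∀ i, z i ^ p i = q i ^ p i / p i ^ p i := by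
    intro i
    by_cases h : c i = 0
    · have : p i = 0 := by simp [hp, h]
      simp [hz, h, this]
    · have hpi : p i ≠ 0 := by
        simp only [hp, div_ne_zero_iff]
        exact ⟨Nat.cast_ne_zero.mpr h, hM0.ne'⟩
      simp only [hz, if_neg h]
      exact Real.div_rpow (hq0 i) (hp0 i) _
  have hpp_pos : (0:ℝ) < ∏ i, p i ^ p i := by
    apply Finset.prod_pos
    intro i _
    rcases eq_or_lt_of_le (hp0 i) with h | h
    · simp [← h]
    · exact Real.rpow_pos_of_pos h _
  have key2 : ∏ i, q i ^ p i ≤ ∏ i, p i ^ p i := by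
    have h1 : ∏ i, z i ^ p i = (∏ i, q i ^ p i) / ∏ i, p i ^ p i := by
      rw [← Finset.prod_div_distrib]
      exact Finset.prod_congr rfl fun i _ => hzp i
    have := le_trans key hsum
    rw [h1, div_le_one hpp_pos] at this
    exact this
  have hqpow : ∀ (f : ι → ℝ), (∀ i, 0 ≤ f i) → (∏ i, f i ^ p i) ^ M = ∏ i, f i ^ c i := by
    intro f hf
    rw [← Finset.prod_pow]
    refine Finset.prod_congr rfl fun i _ => ?_
    rw [← Real.rpow_natCast (f i ^ p i) M, ← Real.rpow_mul (hf i),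
      div_mul_cancel₀ _ hM0.ne']
    exact Real.rpow_natCast _ _
  calc ∏ i, q i ^ c i = (∏ i, q i ^ p i) ^ M := (hqpow q hq0).symm
    _ ≤ (∏ i, p i ^ p i) ^ M := by
        apply pow_le_pow_left₀ _ key2
        exact Finset.prod_nonneg fun i _ => Real.rpow_nonneg (hq0 i) _
    _ = ∏ i, p i ^ c i := hqpow p hp0

/-- The snoc equivalence between pairs and tuples. -/
def snocEquiv' (k : ℕ) (S : Type*) : ((Fin k → S) × S) ≃ (Fin (k + 1) → S) where
  toFun p := Fin.snoc p.1 p.2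
  invFun v := (Fin.init v, v (Fin.last k))
  left_inv p := by simp [Fin.init_snoc, Fin.snoc_last]
  right_inv v := by simp [Fin.snoc_init_self]

lemma likelihood_factor {n k : ℕ} [Fintype S] [DecidableEq S] (hkn : k < n)
    (pi : (Fin k → S) → ℝ) (a : (Fin (k + 1) → S) → ℝ) (u : (Fin n → S) → ℕ) :
    ∏ x : Fin n → S, psi hkn pi a x ^ u x =
      (∏ w : Fin k → S, pi w ^ (∑ x : Fin n → S, if pathInit hkn.le x = w then u x else 0)) *
      ∏ h : Fin k → S, ∏ j : S, a (Fin.snoc h j) ^ (∑ x : Fin n → S, u x *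
        (Finset.univ.filter fun ℓ : Fin (n - k) => window hkn ℓ x = Fin.snoc h j).card) := by
  have e1 : ∏ x : Fin n → S, psi hkn pi a x ^ u x =
      (∏ x : Fin n → S, pi (pathInit hkn.le x) ^ u x) *
      ∏ x : Fin n → S, ∏ ℓ : Fin (n - k), a (window hkn ℓ x) ^ u x := by
    rw [← Finset.prod_mul_distrib]
    refine Finset.prod_congr rfl fun x _ => ?_
    rw [psi, mul_pow, Finset.prod_pow]
  rw [e1]
  congr 1
  · -- initial part
    rw [← Finset.prod_fiberwise_of_maps_to (g := pathInit hkn.le) (fun x _ => Finset.mem_univ _)]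
    refine Finset.prod_congr rfl fun w _ => ?_
    rw [← Finset.sum_filter, ← Finset.prod_pow_eq_pow_sum]
    refine Finset.prod_congr rfl fun x hx => ?_
    rw [(Finset.mem_filter.mp hx).2]
  · -- transition part
    have stepA : ∀ x : Fin n → S, ∏ ℓ : Fin (n - k), a (window hkn ℓ x) ^ u x =
        ∏ v : Fin (k + 1) → S, a v ^ (u x *
          (Finset.univ.filter fun ℓ : Fin (n - k) => window hkn ℓ x = v).card) := by
      intro x
      rw [← Finset.prod_fiberwise_of_maps_to (g := fun ℓ => window hkn ℓ x)
        (fun ℓ _ => Finset.mem_univ _) (fun ℓ => a (window hkn ℓ x) ^ u x)]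
      refine Finset.prod_congr rfl fun v _ => ?_
      rw [Finset.prod_congr rfl (fun ℓ hℓ => by rw [(Finset.mem_filter.mp hℓ).2]),
        Finset.prod_const, ← pow_mul]
    have stepB : ∏ x : Fin n → S, ∏ ℓ : Fin (n - k), a (window hkn ℓ x) ^ u x =
        ∏ v : Fin (k + 1) → S, a v ^ (∑ x : Fin n → S, u x *
          (Finset.univ.filter fun ℓ : Fin (n - k) => window hkn ℓ x = v).card) := by
      rw [Finset.prod_congr rfl (fun x _ => stepA x), Finset.prod_comm]
      exact Finset.prod_congr rfl fun v _ => Finset.prod_pow_eq_pow_sum ..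
    rw [stepB]
    rw [← Fintype.prod_prod_type (f := fun p : (Fin k → S) × S =>
      a (Fin.snoc p.1 p.2) ^ (∑ x : Fin n → S, u x *
        (Finset.univ.filter fun ℓ : Fin (n - k) => window hkn ℓ x = Fin.snoc p.1 p.2).card))]
    exact (Fintype.prod_equiv (snocEquiv' k S) _ _ (fun p => by simp [snocEquiv']; congr)).symm



/-- The pooled empirical frequencies are the maximum likelihood estimators of the homogeneous
`k`-th order multistate Markov model parameters: any stochastic pair `(π̂, â)` given by
`π̂(w) = c(w)/M` and `â(h,j) = N(h,j)/D(h)` (whenever `D(h) > 0`) maximizes the likelihood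
over all stochastic parameter pairs. -/
theorem stmt17 (S : Type*) [Fintype S] [DecidableEq S] [Nonempty S]
    (n k : ℕ) (hk : 1 ≤ k) (hkn : k < n)
    (u : (Fin n → S) → ℕ) (hM : 0 < ∑ x : Fin n → S, u x)
    (N : (Fin k → S) → S → ℕ)
    (hN : ∀ (h : Fin k → S) (j : S), N h j = ∑ x : Fin n → S, u x *
      (Finset.univ.filter fun ℓ : Fin (n - k) => window hkn ℓ x = Fin.snoc h j).card)
    (c : (Fin k → S) → ℕ)
    (hc : ∀ w : Fin k → S,
      c w = ∑ x : Fin n → S, if pathInit hkn.le x = w then u x else 0)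
    (piHat : (Fin k → S) → ℝ) (aHat : (Fin (k + 1) → S) → ℝ)
    (hpiHat0 : ∀ w, 0 ≤ piHat w) (hpiHat1 : (∑ w : Fin k → S, piHat w) = 1)
    (haHat0 : ∀ (h : Fin k → S) (j : S), 0 ≤ aHat (Fin.snoc h j))
    (haHat1 : ∀ h : Fin k → S, (∑ j : S, aHat (Fin.snoc h j)) = 1)
    (hpiHat : ∀ w, piHat w = (c w : ℝ) / (∑ x : Fin n → S, u x : ℝ))
    (haHat : ∀ (h : Fin k → S) (j : S), 0 < ∑ j' : S, N h j' →
      aHat (Fin.snoc h j) = (N h j : ℝ) / (∑ j' : S, N h j' : ℝ)) :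
    ∀ (pi : (Fin k → S) → ℝ) (a : (Fin (k + 1) → S) → ℝ),
      (∀ w, 0 ≤ pi w) → (∑ w : Fin k → S, pi w) = 1 →
      (∀ (h : Fin k → S) (j : S), 0 ≤ a (Fin.snoc h j)) →
      (∀ h : Fin k → S, (∑ j : S, a (Fin.snoc h j)) = 1) →
      (∏ x : Fin n → S, psi hkn pi a x ^ u x)
        ≤ ∏ x : Fin n → S, psi hkn piHat aHat x ^ u x := by
  intro pi a hpi0 hpi1 ha0 ha1
  set M := ∑ x : Fin n → S, u x with hMdef
  have hcsum : ∑ w : Fin k → S, c w = M := by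
    rw [Finset.sum_congr rfl fun w _ => hc w, Finset.sum_comm]
    exact Finset.sum_congr rfl fun x _ => by simp
  have hfac : ∀ (pi' : (Fin k → S) → ℝ) (a' : (Fin (k + 1) → S) → ℝ),
      ∏ x : Fin n → S, psi hkn pi' a' x ^ u x =
        (∏ w : Fin k → S, pi' w ^ c w) *
        ∏ h : Fin k → S, ∏ j : S, a' (Fin.snoc h j) ^ N h j := by
    intro pi' a'
    rw [likelihood_factor hkn pi' a' u]
    congr 1
    · exact Finset.prod_congr rfl fun w _ => by rw [← hc w]
    · exact Finset.prod_congr rfl fun h _ =>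
        Finset.prod_congr rfl fun j _ => by rw [← hN h j]
  rw [hfac pi a, hfac piHat aHat]
  have bound1 : ∏ w : Fin k → S, pi w ^ c w ≤ ∏ w : Fin k → S, piHat w ^ c w := by
    refine le_trans (gibbs c pi hpi0 hpi1.le M hM hcsum) (le_of_eq ?_)
    exact Finset.prod_congr rfl fun w _ => by rw [hpiHat w, hMdef, Nat.cast_sum]
  have bound2 : ∀ h : Fin k → S,
      ∏ j : S, a (Fin.snoc h j) ^ N h j ≤ ∏ j : S, aHat (Fin.snoc h j) ^ N h j := by
    intro h
    by_cases hD : 0 < ∑ j : S, N h j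
    · refine le_trans (gibbs (N h) (fun j => a (Fin.snoc h j)) (fun j => ha0 h j)
        (ha1 h).le _ hD rfl) (le_of_eq ?_)
      exact Finset.prod_congr rfl fun j _ => by rw [haHat h j hD, Nat.cast_sum]
    · have hz : ∀ j : S, N h j = 0 := by
        intro j
        have := Nat.eq_zero_of_not_pos hD
        exact Finset.sum_eq_zero_iff.mp this j (Finset.mem_univ j)
      simp [hz]
  refine mul_le_mul bound1 (Finset.prod_le_prod (fun h _ => ?_) (fun h _ => bound2 h))
    (Finset.prod_nonneg fun h _ => Finset.prod_nonneg fun j _ => pow_nonneg (ha0 h j) _)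
    (Finset.prod_nonneg fun w _ => pow_nonneg (hpiHat0 w) _)
  exact Finset.prod_nonneg fun j _ => pow_nonneg (ha0 h j) _


end MSM
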